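/- arXiv:2407.11094 — 2 statements merged into one kernel-verified Lean document; each statement's English description precedes it below -/
import Mathlib

section
/- Let M_∞, M_1 ⊂ R^d be disjoint convex sets, V a symmetric positive-definite d×d matrix, and G_θ = N(θ, V). Let G_∞ (resp. G_1) be the convex hull of {G_θ : θ ∈ M_∞} (resp. {G_θ : θ ∈ M_1}), viewed as sets of probability densities. Then G_∞ and G_1 are disjoint. -/
/-!
Gaussian densities with a common covariance `V` are linearly independent: dividing `g_θ(x)` by
the nowhere-vanishing common factor `g_0(x)` leaves `exp(-½⟪θ, V⁻¹θ⟫) · exp ⟪x, V⁻¹θ⟫`, a nonzero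
multiple of an additive character of `ℝ^d`, and distinct characters are linearly independent
(Dedekind). The convex hulls of the images of disjoint index sets under a linearly independent
family lie in disjoint affine spans.
-/

open MeasureTheory Real
open scoped RealInnerProductSpace

/-- Density of the Gaussian `N(μ, V)` on `ℝ^d`, where `V` is the covariance operator. -/
noncomputable def gaussDensity {d : ℕ}
    (V : EuclideanSpace ℝ (Fin d) ≃L[ℝ] EuclideanSpace ℝ (Fin d))
    (μ x : EuclideanSpace ℝ (Fin d)) : ℝ :=
  (Real.sqrt ((2 * π) ^ d *
      LinearMap.det ((V : EuclideanSpace ℝ (Fin d) →L[ℝ] EuclideanSpace ℝ (Fin d)) :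
        EuclideanSpace ℝ (Fin d) →ₗ[ℝ] EuclideanSpace ℝ (Fin d))))⁻¹ *
    Real.exp (-(1 / 2) * ⟪x - μ, V.symm (x - μ)⟫)

section InnerProductSpace

variable {E : Type*} [NormedAddCommGroup E] [InnerProductSpace ℝ E]

noncomputable def expInnerChar (v : E) : Multiplicative E →* ℝ where
  toFun x := exp ⟪x.toAdd, v⟫
  map_one' := by simp
  map_mul' x y := by simp [inner_add_left, exp_add]

theorem expInnerChar_injective : Function.Injective (expInnerChar (E := E)) := by
  intro v w h
  have hvw : ⟪v - w, v⟫ = ⟪v - w, w⟫ := by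
    simpa [expInnerChar] using DFunLike.congr_fun h (.ofAdd (v - w))
  rw [← sub_eq_zero, ← inner_self_eq_zero (𝕜 := ℝ), inner_sub_right, hvw, sub_self]

theorem linearIndependent_exp_inner :
    LinearIndependent ℝ (fun v : E => fun x : E => exp ⟪x, v⟫) :=
  (linearIndependent_monoidHom (Multiplicative E) ℝ).comp _ expInnerChar_injective

theorem LinearMap.IsSymmetric.inner_sub_map_sub {T : E →ₗ[ℝ] E} (hT : T.IsSymmetric) (x y : E) :
    ⟪x - y, T (x - y)⟫ = ⟪x, T x⟫ - 2 * ⟪x, T y⟫ + ⟪y, T y⟫ := by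
  have : ⟪y, T x⟫ = ⟪x, T y⟫ := by rw [← hT, real_inner_comm]
  simp only [map_sub, inner_sub_left, inner_sub_right, this]
  ring

theorem LinearMap.IsSymmetric.det_pos [FiniteDimensional ℝ E] {T : E →ₗ[ℝ] E}
    (hT : T.IsSymmetric) (hpos : ∀ x, x ≠ 0 → 0 < ⟪x, T x⟫) : 0 < T.det := by
  rw [hT.det_eq_prod_eigenvalues rfl]
  refine Finset.prod_pos fun i _ => ?_
  let b := hT.eigenvectorBasis rfl
  have hb : ⟪b i, T (b i)⟫ = hT.eigenvalues rfl i := by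
    simp [b, inner_smul_right, b.orthonormal.1 i]
  exact hb ▸ hpos (b i) (b.orthonormal.ne_zero i)

end InnerProductSpace

theorem LinearIndependent.mul_left {ι X R : Type*} [CommRing R] [NoZeroDivisors R]
    {v : ι → X → R} (hv : LinearIndependent R v) {g : X → R} (hg : ∀ x, g x ≠ 0) :
    LinearIndependent R (fun i => g * v i) := by
  refine hv.map' (LinearMap.mulLeft R g) (LinearMap.ker_eq_bot'.mpr fun f hf => ?_)
  funext x
  exact (mul_eq_zero.mp (congr_fun hf x)).resolve_left (hg x)

theorem LinearIndependent.disjoint_convexHull_image {𝕜 E ι : Type*} [Field 𝕜] [LinearOrder 𝕜]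
    [IsStrictOrderedRing 𝕜] [AddCommGroup E] [Module 𝕜 E] {v : ι → E}
    (hv : LinearIndependent 𝕜 v) {s t : Set ι} (hst : Disjoint s t) :
    Disjoint (convexHull 𝕜 (v '' s)) (convexHull 𝕜 (v '' t)) :=
  (hv.affineIndependent.affineSpan_disjoint_of_disjoint hst).mono
    (convexHull_subset_affineSpan _) (convexHull_subset_affineSpan _)

section Gaussian

variable {d : ℕ} (V : EuclideanSpace ℝ (Fin d) ≃L[ℝ] EuclideanSpace ℝ (Fin d))

theorem gaussDensity_pos (hsymm : ∀ x y, ⟪V x, y⟫ = ⟪x, V y⟫)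
    (hposdef : ∀ x, x ≠ 0 → 0 < ⟪x, V x⟫) (θ x : EuclideanSpace ℝ (Fin d)) :
    0 < gaussDensity V θ x := by
  have hV : ((V : EuclideanSpace ℝ (Fin d) →L[ℝ] EuclideanSpace ℝ (Fin d)) :
      EuclideanSpace ℝ (Fin d) →ₗ[ℝ] EuclideanSpace ℝ (Fin d)).IsSymmetric := hsymm
  have := hV.det_pos hposdef
  unfold gaussDensity
  positivity

theorem gaussDensity_eq_mul_exp_inner (hsymm : ∀ x y, ⟪V x, y⟫ = ⟪x, V y⟫)
    (θ x : EuclideanSpace ℝ (Fin d)) :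
    gaussDensity V θ x =
      gaussDensity V 0 x * (exp (-(1 / 2) * ⟪θ, V.symm θ⟫) * exp ⟪x, V.symm θ⟫) := by
  have hsymm' : (V.symm : EuclideanSpace ℝ (Fin d) →L[ℝ] _).IsSymmetric := fun x y => by
    simpa using (hsymm (V.symm x) (V.symm y)).symm
  have hquad := hsymm'.inner_sub_map_sub x θ
  simp only [ContinuousLinearMap.coe_coe, ContinuousLinearEquiv.coe_coe] at hquad
  simp only [gaussDensity, sub_zero, hquad, mul_assoc, ← exp_add]
  ring_nf

theorem linearIndependent_gaussDensity (hsymm : ∀ x y, ⟪V x, y⟫ = ⟪x, V y⟫)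
    (hposdef : ∀ x, x ≠ 0 → 0 < ⟪x, V x⟫) : LinearIndependent ℝ (gaussDensity V) := by
  have h := ((linearIndependent_exp_inner.comp V.symm V.symm.injective).units_smul
    fun θ => Units.mk0 (exp (-(1 / 2) * ⟪θ, V.symm θ⟫)) (exp_ne_zero _)).mul_left
    fun x => (gaussDensity_pos V hsymm hposdef 0 x).ne'
  convert h using 1
  · funext θ x
    simp [gaussDensity_eq_mul_exp_inner V hsymm θ x]
  · rfl

end Gaussian

theorem gaussian_hulls_disjoint_general {d : ℕ}
    (V : EuclideanSpace ℝ (Fin d) ≃L[ℝ] EuclideanSpace ℝ (Fin d))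
    (hsymm : ∀ x y : EuclideanSpace ℝ (Fin d), ⟪V x, y⟫ = ⟪x, V y⟫)
    (hposdef : ∀ x : EuclideanSpace ℝ (Fin d), x ≠ 0 → 0 < ⟪x, V x⟫)
    (Minf M1 : Set (EuclideanSpace ℝ (Fin d)))
    (hdisj : Disjoint Minf M1) :
    Disjoint (convexHull ℝ ((fun θ => gaussDensity V θ) '' Minf))
      (convexHull ℝ ((fun θ => gaussDensity V θ) '' M1)) :=
  (linearIndependent_gaussDensity V hsymm hposdef).disjoint_convexHull_image hdisj

/-- If `M_∞, M_1 ⊂ ℝ^d` are disjoint convex sets and `V` is a symmetric positive-definite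
covariance, then the convex hulls of the Gaussian density families
`{N(θ, V) : θ ∈ M_∞}` and `{N(θ, V) : θ ∈ M_1}` are disjoint. -/
theorem gaussian_hulls_disjoint {d : ℕ}
    (V : EuclideanSpace ℝ (Fin d) ≃L[ℝ] EuclideanSpace ℝ (Fin d))
    (hsymm : ∀ x y : EuclideanSpace ℝ (Fin d), ⟪V x, y⟫ = ⟪x, V y⟫)
    (hposdef : ∀ x : EuclideanSpace ℝ (Fin d), x ≠ 0 → 0 < ⟪x, V x⟫)
    (Minf M1 : Set (EuclideanSpace ℝ (Fin d)))
    (hdisj : Disjoint Minf M1) (hconvinf : Convex ℝ Minf) (hconv1 : Convex ℝ M1) :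
    Disjoint (convexHull ℝ ((fun θ => gaussDensity V θ) '' Minf))
      (convexHull ℝ ((fun θ => gaussDensity V θ) '' M1)) :=
  gaussian_hulls_disjoint_general V hsymm hposdef Minf M1 hdisj
end

section
/- (Lower bound on ARL via renewal decomposition) Let Z_1, Z_2,... be i.i.d. with E[exp(Z_1)] ≤ 1, and define the CUSUM stopping time T = inf{n ≥ 1 : max_{1≤k≤n} Σ_{i=k}^n Z_i ≥ ω'} for ω' > 0. Then E[T] ≥ e^{ω'}. -/
/-!
The Shiryaev–Roberts statistic `R n = ∑_{k=1}^n exp (∑_{i=k}^n Z i)` satisfies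
`R (n + 1) = (R n + 1) * exp (Z (n + 1))`, so as long as `E[exp (Z (n + 1)) | past] ≤ 1` the
process `R n - n`, stopped at the CUSUM time `T`, is a supermartingale. At the crossing time one
of the summands of `R` is at least `e^w`, so optional stopping (done by hand on the events
`{n < T}`) gives `e^w P(T ≤ N) ≤ E[min T N] ≤ E[T]`. Letting `N → ∞` proves the claim when `T` is
a.s. finite, and otherwise `E[T] = ∞`.
-/

open MeasureTheory ProbabilityTheory Real
open scoped ENNReal

theorem Finset.sum_range_add_le_add_sum_range {M : Type*} [AddCommMonoid M] [PartialOrder M]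
    [IsOrderedAddMonoid M] {a b e : ℕ → M} (h : ∀ n, e n + a (n + 1) ≤ a n + b n) (N : ℕ) :
    ∑ n ∈ Finset.range N, e n + a N ≤ a 0 + ∑ n ∈ Finset.range N, b n := by
  induction N with
  | zero => simp
  | succ N ih =>
    calc ∑ n ∈ Finset.range (N + 1), e n + a (N + 1)
        = ∑ n ∈ Finset.range N, e n + (e N + a (N + 1)) := by rw [Finset.sum_range_succ, add_assoc]
      _ ≤ ∑ n ∈ Finset.range N, e n + (a N + b N) := add_le_add le_rfl (h N)
      _ = (∑ n ∈ Finset.range N, e n + a N) + b N := (add_assoc _ _ _).symm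
      _ ≤ (a 0 + ∑ n ∈ Finset.range N, b n) + b N := by gcongr
      _ = a 0 + ∑ n ∈ Finset.range (N + 1), b n := by rw [Finset.sum_range_succ, add_assoc]

namespace Cusum

section Path

variable (z : ℕ → ℝ) (w : ℝ)

/-- The CUSUM statistic `max_{1 ≤ k ≤ n} ∑_{i=k}^n z i` is at least `w` at time `n`. -/
def Crosses (n : ℕ) : Prop :=
  ∃ k, 1 ≤ k ∧ k ≤ n ∧ w ≤ ∑ i ∈ Finset.Icc k n, z i

noncomputable def cusumTime : ℝ≥0∞ :=
  sInf {t : ℝ≥0∞ | ∃ n : ℕ, t = n ∧ 1 ≤ n ∧ Crosses z w n}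

noncomputable def shiryaevRoberts (n : ℕ) : ℝ≥0∞ :=
  ∑ k ∈ Finset.Icc 1 n, ENNReal.ofReal (exp (∑ i ∈ Finset.Icc k n, z i))

variable {z w}

lemma shiryaevRoberts_succ (n : ℕ) :
    shiryaevRoberts z (n + 1) =
      (shiryaevRoberts z n + 1) * ENNReal.ofReal (exp (z (n + 1))) := by
  have hsplit : ∀ k ∈ Finset.Icc 1 n,
      ENNReal.ofReal (exp (∑ i ∈ Finset.Icc k (n + 1), z i)) =
        ENNReal.ofReal (exp (∑ i ∈ Finset.Icc k n, z i)) * ENNReal.ofReal (exp (z (n + 1))) := by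
    intro k hk
    rw [Finset.sum_Icc_succ_top (by simp at hk; omega), exp_add,
      ENNReal.ofReal_mul (exp_pos _).le]
  rw [shiryaevRoberts, Finset.sum_Icc_succ_top (by omega), Finset.sum_congr rfl hsplit,
    ← Finset.sum_mul, Finset.Icc_self, Finset.sum_singleton, add_mul, one_mul, shiryaevRoberts]

lemma ofReal_exp_le_shiryaevRoberts {n : ℕ} (h : Crosses z w n) :
    ENNReal.ofReal (exp w) ≤ shiryaevRoberts z n := by
  obtain ⟨k, hk1, hkn, hw⟩ := h
  calc ENNReal.ofReal (exp w) ≤ ENNReal.ofReal (exp (∑ i ∈ Finset.Icc k n, z i)) := by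
        gcongr
    _ ≤ shiryaevRoberts z n :=
        Finset.single_le_sum (f := fun k => ENNReal.ofReal (exp (∑ i ∈ Finset.Icc k n, z i)))
          (fun _ _ => zero_le) (Finset.mem_Icc.2 ⟨hk1, hkn⟩)

lemma add_one_le_cusumTime {n : ℕ} (h : ∀ m ∈ Finset.Icc 1 n, ¬ Crosses z w m) :
    (n : ℝ≥0∞) + 1 ≤ cusumTime z w := by
  refine le_sInf ?_
  rintro _ ⟨m, rfl, hm, hcross⟩
  have : n + 1 ≤ m := by
    by_contra! hlt
    exact h m (Finset.mem_Icc.2 ⟨hm, by omega⟩) hcross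
  exact_mod_cast this

lemma natCast_lt_cusumTime_iff {n : ℕ} :
    (n : ℝ≥0∞) < cusumTime z w ↔ ∀ m ∈ Finset.Icc 1 n, ¬ Crosses z w m := by
  refine ⟨fun hlt m hm hcross => ?_, fun h => ?_⟩
  · have hle : cusumTime z w ≤ m := sInf_le ⟨m, rfl, (Finset.mem_Icc.1 hm).1, hcross⟩
    exact hlt.not_ge (hle.trans (by exact_mod_cast (Finset.mem_Icc.1 hm).2))
  · exact ENNReal.lt_add_right (ENNReal.natCast_ne_top n) one_ne_zero |>.trans_le
      (add_one_le_cusumTime h)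

lemma natCast_add_one_lt_cusumTime_iff {n : ℕ} :
    ((n + 1 : ℕ) : ℝ≥0∞) < cusumTime z w ↔
      (n : ℝ≥0∞) < cusumTime z w ∧ ¬ Crosses z w (n + 1) := by
  simp only [natCast_lt_cusumTime_iff, Finset.mem_Icc]
  refine ⟨fun h => ⟨fun m hm => h m ⟨hm.1, by omega⟩, h (n + 1) ⟨by omega, le_rfl⟩⟩,
    fun ⟨h, hlast⟩ m hm => ?_⟩
  rcases (Nat.lt_or_eq_of_le hm.2) with hlt | rfl
  · exact h m ⟨hm.1, by omega⟩
  · exact hlast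

lemma exists_first_crossing {N : ℕ} (h : ¬ (N : ℝ≥0∞) < cusumTime z w) :
    ∃ n < N, (n : ℝ≥0∞) < cusumTime z w ∧ Crosses z w (n + 1) := by
  induction N with
  | zero => exact absurd (natCast_lt_cusumTime_iff.2 (by simp)) h
  | succ N ih =>
    by_cases hN : (N : ℝ≥0∞) < cusumTime z w
    · have hcross : Crosses z w (N + 1) := by
        by_contra hnot
        exact h (natCast_add_one_lt_cusumTime_iff.2 ⟨hN, hnot⟩)
      exact ⟨N, N.lt_succ_self, hN, hcross⟩
    · obtain ⟨n, hn, hsurv⟩ := ih hN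
      exact ⟨n, hn.trans N.lt_succ_self, hsurv⟩

lemma sum_range_ite_natCast_lt_cusumTime_le (N : ℕ) :
    ∑ n ∈ Finset.range N, (if (n : ℝ≥0∞) < cusumTime z w then 1 else 0) ≤ cusumTime z w := by
  induction N with
  | zero => simp
  | succ N ih =>
    by_cases hN : (N : ℝ≥0∞) < cusumTime z w
    · have hall : ∀ n ∈ Finset.range (N + 1),
          (if (n : ℝ≥0∞) < cusumTime z w then (1 : ℝ≥0∞) else 0) = 1 := fun n hn =>
        if_pos (lt_of_le_of_lt (by exact_mod_cast Finset.mem_range_succ_iff.1 hn) hN)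
      rw [Finset.sum_congr rfl hall, Finset.sum_const, Finset.card_range, nsmul_one]
      exact_mod_cast add_one_le_cusumTime (natCast_lt_cusumTime_iff.1 hN)
    · rwa [Finset.sum_range_succ, if_neg hN, add_zero]

lemma cusumTime_eq_top (h : ∀ n : ℕ, (n : ℝ≥0∞) < cusumTime z w) : cusumTime z w = ⊤ :=
  top_le_iff.1 (ENNReal.iSup_natCast ▸ iSup_le fun n => (h n).le)

end Path

section Measure

variable {Ω : Type*} {m : MeasurableSpace Ω} {μ : Measure Ω} {ℱ : Filtration ℕ m}
  {Z : ℕ → Ω → ℝ}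

/-- The lintegral form of `μ[exp (Z (n + 1)) | ℱ n] ≤ 1`. -/
def CondExpExpLeOne (ℱ : Filtration ℕ m) (Z : ℕ → Ω → ℝ) (μ : Measure Ω) : Prop :=
  ∀ n (f : Ω → ℝ≥0∞), Measurable[ℱ n] f →
    ∫⁻ ω, f ω * ENNReal.ofReal (exp (Z (n + 1) ω)) ∂μ ≤ ∫⁻ ω, f ω ∂μ

lemma measurable_shiryaevRoberts (hZ : Adapted ℱ Z) (n : ℕ) :
    Measurable[ℱ n] fun ω => shiryaevRoberts (Z · ω) n :=
  Finset.measurable_sum _ fun _ _ => ENNReal.measurable_ofReal.comp <| measurable_exp.comp <|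
    Finset.measurable_sum _ fun _ hi => hZ.measurable_le (Finset.mem_Icc.1 hi).2

lemma measurableSet_crosses (hZ : Adapted ℱ Z) (w : ℝ) (n : ℕ) :
    MeasurableSet[ℱ n] {ω | Crosses (Z · ω) w n} := by
  have hunion : {ω | Crosses (Z · ω) w n} =
      ⋃ k ∈ Finset.Icc 1 n, {ω | w ≤ ∑ i ∈ Finset.Icc k n, Z i ω} := by
    ext ω
    simp [Crosses, and_assoc]
  rw [hunion]
  exact Finset.measurableSet_biUnion _ fun _ _ => measurableSet_le measurable_const <|
    Finset.measurable_sum _ fun _ hi => hZ.measurable_le (Finset.mem_Icc.1 hi).2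

lemma measurableSet_natCast_lt_cusumTime (hZ : Adapted ℱ Z) (w : ℝ) (n : ℕ) :
    MeasurableSet[ℱ n] {ω | (n : ℝ≥0∞) < cusumTime (Z · ω) w} := by
  have hinter : {ω | (n : ℝ≥0∞) < cusumTime (Z · ω) w} =
      ⋂ k ∈ Finset.Icc 1 n, {ω | Crosses (Z · ω) w k}ᶜ := by
    ext ω
    simp [natCast_lt_cusumTime_iff]
  rw [hinter]
  exact Finset.measurableSet_biInter _ fun k hk =>
    (ℱ.mono (Finset.mem_Icc.1 hk).2 _ (measurableSet_crosses hZ w k)).compl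

lemma shiryaevRoberts_step (hZ : Adapted ℱ Z) (hexp : CondExpExpLeOne ℱ Z μ) (w : ℝ) (n : ℕ) :
    ENNReal.ofReal (exp w) *
        μ ({ω | (n : ℝ≥0∞) < cusumTime (Z · ω) w} ∩ {ω | Crosses (Z · ω) w (n + 1)}) +
      ∫⁻ ω in {ω | ((n + 1 : ℕ) : ℝ≥0∞) < cusumTime (Z · ω) w},
        shiryaevRoberts (Z · ω) (n + 1) ∂μ ≤
    ∫⁻ ω in {ω | (n : ℝ≥0∞) < cusumTime (Z · ω) w}, shiryaevRoberts (Z · ω) n ∂μ +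
      μ {ω | (n : ℝ≥0∞) < cusumTime (Z · ω) w} := by
  set S := {ω | (n : ℝ≥0∞) < cusumTime (Z · ω) w}
  set C := {ω | Crosses (Z · ω) w (n + 1)}
  set R := fun k ω => shiryaevRoberts (Z · ω) k
  have hS : MeasurableSet[ℱ n] S := measurableSet_natCast_lt_cusumTime hZ w n
  have hC : MeasurableSet C := ℱ.le _ _ (measurableSet_crosses hZ w (n + 1))
  have hsurv : {ω | ((n + 1 : ℕ) : ℝ≥0∞) < cusumTime (Z · ω) w} = S \ C := by
    ext ω
    exact natCast_add_one_lt_cusumTime_iff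
  have hcross : ENNReal.ofReal (exp w) * μ (S ∩ C) ≤ ∫⁻ ω in S ∩ C, R (n + 1) ω ∂μ := by
    rw [← setLIntegral_const]
    exact setLIntegral_mono' ((ℱ.le n _ hS).inter hC) fun ω hω =>
      ofReal_exp_le_shiryaevRoberts hω.2
  have hmart : ∫⁻ ω in S, R (n + 1) ω ∂μ ≤ ∫⁻ ω in S, (R n ω + 1) ∂μ := by
    have hf : Measurable[ℱ n] (S.indicator fun ω => R n ω + 1) :=
      ((measurable_shiryaevRoberts hZ n).add_const 1).indicator hS
    rw [← lintegral_indicator (ℱ.le n _ hS), ← lintegral_indicator (ℱ.le n _ hS)]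
    calc ∫⁻ ω, S.indicator (fun ω => R (n + 1) ω) ω ∂μ
        = ∫⁻ ω, S.indicator (fun ω => R n ω + 1) ω * ENNReal.ofReal (exp (Z (n + 1) ω)) ∂μ := by
          simp_rw [R, shiryaevRoberts_succ, Set.indicator_mul_left]
      _ ≤ _ := hexp n _ hf
  rw [hsurv]
  calc ENNReal.ofReal (exp w) * μ (S ∩ C) + ∫⁻ ω in S \ C, R (n + 1) ω ∂μ
      ≤ ∫⁻ ω in S ∩ C, R (n + 1) ω ∂μ + ∫⁻ ω in S \ C, R (n + 1) ω ∂μ := by gcongr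
    _ = ∫⁻ ω in S, R (n + 1) ω ∂μ := lintegral_inter_add_sdiff _ _ hC
    _ ≤ ∫⁻ ω in S, (R n ω + 1) ∂μ := hmart
    _ = ∫⁻ ω in S, R n ω ∂μ + μ S := by
      rw [lintegral_add_right _ measurable_const, setLIntegral_one]

lemma ofReal_exp_mul_measure_le_lintegral_cusumTime (hZ : Adapted ℱ Z)
    (hexp : CondExpExpLeOne ℱ Z μ) (w : ℝ) (N : ℕ) :
    ENNReal.ofReal (exp w) * μ {ω | ¬ (N : ℝ≥0∞) < cusumTime (Z · ω) w} ≤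
      ∫⁻ ω, cusumTime (Z · ω) w ∂μ := by
  set S : ℕ → Set Ω := fun n => {ω | (n : ℝ≥0∞) < cusumTime (Z · ω) w}
  set C : ℕ → Set Ω := fun n => {ω | Crosses (Z · ω) w n}
  have hS : ∀ n, MeasurableSet (S n) := fun n =>
    ℱ.le n _ (measurableSet_natCast_lt_cusumTime hZ w n)
  have hfirst : μ {ω | ¬ (N : ℝ≥0∞) < cusumTime (Z · ω) w} ≤
      ∑ n ∈ Finset.range N, μ (S n ∩ C (n + 1)) := by
    refine (measure_mono fun ω hω => ?_).trans (measure_biUnion_finset_le _ _)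
    obtain ⟨n, hn, hmem⟩ := exists_first_crossing hω
    exact Set.mem_biUnion (Finset.mem_range.2 hn) hmem
  have htelescope : ENNReal.ofReal (exp w) * ∑ n ∈ Finset.range N, μ (S n ∩ C (n + 1)) ≤
      ∑ n ∈ Finset.range N, μ (S n) := by
    have h := Finset.sum_range_add_le_add_sum_range
      (a := fun n => ∫⁻ ω in S n, shiryaevRoberts (Z · ω) n ∂μ)
      (fun n => shiryaevRoberts_step hZ hexp w n) N
    simp only [shiryaevRoberts, Finset.Icc_eq_empty_of_lt one_pos,
      Finset.sum_empty, lintegral_zero, zero_add] at h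
    rw [Finset.mul_sum]
    exact le_self_add.trans h
  have htail : ∑ n ∈ Finset.range N, μ (S n) ≤ ∫⁻ ω, cusumTime (Z · ω) w ∂μ := by
    calc ∑ n ∈ Finset.range N, μ (S n)
        = ∫⁻ ω, ∑ n ∈ Finset.range N, (S n).indicator 1 ω ∂μ := by
          rw [lintegral_finsetSum _ fun n _ => measurable_one.indicator (hS n)]
          simp only [lintegral_indicator_one (hS _)]
      _ ≤ ∫⁻ ω, cusumTime (Z · ω) w ∂μ := lintegral_mono fun ω => by
          simpa only [Set.indicator_apply, Set.mem_ofPred_eq, Pi.one_apply, S] using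
            sum_range_ite_natCast_lt_cusumTime_le N
  calc ENNReal.ofReal (exp w) * μ {ω | ¬ (N : ℝ≥0∞) < cusumTime (Z · ω) w}
      ≤ ENNReal.ofReal (exp w) * ∑ n ∈ Finset.range N, μ (S n ∩ C (n + 1)) := by gcongr
    _ ≤ ∫⁻ ω, cusumTime (Z · ω) w ∂μ := htelescope.trans htail

theorem ofReal_exp_le_lintegral_cusumTime [IsProbabilityMeasure μ] (hZ : Adapted ℱ Z)
    (hexp : CondExpExpLeOne ℱ Z μ) (w : ℝ) :
    ENNReal.ofReal (exp w) ≤ ∫⁻ ω, cusumTime (Z · ω) w ∂μ := by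
  set S : ℕ → Set Ω := fun n => {ω | (n : ℝ≥0∞) < cusumTime (Z · ω) w}
  have hS : MeasurableSet (⋂ n, S n) := MeasurableSet.iInter fun n =>
    ℱ.le n _ (measurableSet_natCast_lt_cusumTime hZ w n)
  rcases eq_or_ne (μ (⋂ n, S n)) 0 with hnull | hpos
  · have hmono : Monotone fun N => (S N)ᶜ := fun a b hab =>
      Set.compl_subset_compl.2 fun _ hω => show (a : ℝ≥0∞) < _ from (Nat.cast_le.2 hab).trans_lt hω
    have hfinite : μ (⋃ N, (S N)ᶜ) = 1 := by
      rw [← Set.compl_iInter, prob_compl_eq_one_iff hS]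
      exact hnull
    calc ENNReal.ofReal (exp w) = ENNReal.ofReal (exp w) * μ (⋃ N, (S N)ᶜ) := by
          rw [hfinite, mul_one]
      _ = ⨆ N, ENNReal.ofReal (exp w) * μ (S N)ᶜ := by
          rw [hmono.measure_iUnion, ENNReal.mul_iSup]
      _ ≤ ∫⁻ ω, cusumTime (Z · ω) w ∂μ :=
          iSup_le fun N => ofReal_exp_mul_measure_le_lintegral_cusumTime hZ hexp w N
  · calc ENNReal.ofReal (exp w) ≤ ∫⁻ _ in ⋂ n, S n, ⊤ ∂μ := by
          rw [setLIntegral_const, ENNReal.top_mul hpos]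
          exact le_top
      _ = ∫⁻ ω in ⋂ n, S n, cusumTime (Z · ω) w ∂μ :=
          setLIntegral_congr_fun hS fun ω hω => (cusumTime_eq_top (Set.mem_iInter.1 hω)).symm
      _ ≤ ∫⁻ ω, cusumTime (Z · ω) w ∂μ := setLIntegral_le_lintegral _ _

lemma lintegral_ofReal_exp_le_one {X Y : Ω → ℝ}
    (hXY : IdentDistrib X Y μ μ) (hint : Integrable (fun ω => exp (Y ω)) μ)
    (hle : ∫ ω, exp (Y ω) ∂μ ≤ 1) :
    ∫⁻ ω, ENNReal.ofReal (exp (X ω)) ∂μ ≤ 1 := by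
  have hexpXY := hXY.comp (ENNReal.measurable_ofReal.comp measurable_exp)
  rw [show ∫⁻ ω, ENNReal.ofReal (exp (X ω)) ∂μ = ∫⁻ ω, ENNReal.ofReal (exp (Y ω)) ∂μ from
      hexpXY.lintegral_eq,
    ← ofReal_integral_eq_lintegral_ofReal hint (ae_of_all _ fun ω => (exp_pos _).le)]
  exact ENNReal.ofReal_le_one.2 hle

lemma condExpExpLeOne_natural (hmeas : ∀ i, Measurable (Z i))
    (hindep : iIndepFun Z μ) (hident : ∀ i, IdentDistrib (Z i) (Z 0) μ μ)
    (hint : Integrable (fun ω => exp (Z 0 ω)) μ) (hle : ∫ ω, exp (Z 0 ω) ∂μ ≤ 1) :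
    CondExpExpLeOne (Filtration.natural Z fun i => (hmeas i).stronglyMeasurable) Z μ := by
  intro n f hf
  have hpast_future := indep_iSup_of_disjoint (fun i => (hmeas i).comap_le) hindep.iIndep
    (Set.disjoint_singleton_right.2 (by simp) : Disjoint (Set.Iic n) {n + 1})
  have hnext : Measurable[⨆ i ∈ ({n + 1} : Set ℕ), (inferInstance : MeasurableSpace ℝ).comap (Z i)]
      fun ω => ENNReal.ofReal (exp (Z (n + 1) ω)) :=
    (ENNReal.measurable_ofReal.comp (measurable_exp.comp (comap_measurable (Z (n + 1))))).mono
      (le_iSup₂_of_le (n + 1) rfl le_rfl) le_rfl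
  rw [lintegral_mul_eq_lintegral_mul_lintegral_of_independent_measurableSpace
    ((Filtration.natural Z _).le n) (iSup₂_le fun i _ => (hmeas i).comap_le) hpast_future hf hnext]
  exact mul_le_of_le_one_right' (lintegral_ofReal_exp_le_one (hident (n + 1)) hint hle)

end Measure

end Cusum

open Cusum

theorem cusum_arl_lower_bound_general {Ω : Type*} [MeasurableSpace Ω]
    (μ : Measure Ω) [IsProbabilityMeasure μ] (Z : ℕ → Ω → ℝ)
    (hmeas : ∀ i, Measurable (Z i))
    (hindep : iIndepFun Z μ)
    (hident : ∀ i, IdentDistrib (Z i) (Z 0) μ μ)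
    (hintexp : Integrable (fun ω => Real.exp (Z 0 ω)) μ)
    (hle : ∫ ω, Real.exp (Z 0 ω) ∂μ ≤ 1)
    (w : ℝ) :
    ENNReal.ofReal (Real.exp w) ≤
      ∫⁻ ω, sInf {t : ℝ≥0∞ | ∃ n : ℕ, t = n ∧ 1 ≤ n ∧
        ∃ k : ℕ, 1 ≤ k ∧ k ≤ n ∧ w ≤ ∑ i ∈ Finset.Icc k n, Z i ω} ∂μ :=
  ofReal_exp_le_lintegral_cusumTime
    (Filtration.stronglyAdapted_natural fun i => (hmeas i).stronglyMeasurable).adapted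
    (condExpExpLeOne_natural hmeas hindep hident hintexp hle) w

/-- Lower bound on the average run length of the CUSUM stopping time.  Let
`Z_1, Z_2, ...` be i.i.d. with `E[exp(Z_1)] ≤ 1`, and let
`T = inf {n ≥ 1 : max_{1≤k≤n} Σ_{i=k}^n Z_i ≥ ω'}` for `ω' > 0` (with `inf ∅ = ∞`).
Then `E[T] ≥ e^{ω'}`. -/
theorem cusum_arl_lower_bound {Ω : Type*} [MeasurableSpace Ω]
    (μ : Measure Ω) [IsProbabilityMeasure μ] (Z : ℕ → Ω → ℝ)
    (hmeas : ∀ i, Measurable (Z i))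
    (hindep : iIndepFun Z μ)
    (hident : ∀ i, IdentDistrib (Z i) (Z 0) μ μ)
    (hintexp : Integrable (fun ω => Real.exp (Z 0 ω)) μ)
    (hle : ∫ ω, Real.exp (Z 0 ω) ∂μ ≤ 1)
    (w : ℝ) (hw : 0 < w) :
    ENNReal.ofReal (Real.exp w) ≤
      ∫⁻ ω, sInf {t : ℝ≥0∞ | ∃ n : ℕ, t = n ∧ 1 ≤ n ∧
        ∃ k : ℕ, 1 ≤ k ∧ k ≤ n ∧ w ≤ ∑ i ∈ Finset.Icc k n, Z i ω} ∂μ :=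
  cusum_arl_lower_bound_general μ Z hmeas hindep hident hintexp hle w
end
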